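/- For ε > 0 and σ > 0 define T_ε(σ) := σ·√(1 + ε²/(4σ⁴)) − ε/(2σ). Then for all σ₁, σ₂ > 0 and all 0 < ε < 2σ₁σ₂: |T_ε(σ₁) − T_ε(σ₂)| ≤ (1 + ε/(2σ₁σ₂))·|σ₁ − σ₂|. -/
import Mathlib


open Real

/-- `T_ε(σ) = σ√(1 + ε²/(4σ⁴)) − ε/(2σ)`, the standard deviation produced by one
Schrödinger-bridge step (pushforward by the barycentric projection) applied to the
centered Gaussian with per-coordinate standard deviation `σ`. -/
noncomputable def sbStepSD (ε σ : ℝ) : ℝ :=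
  σ * Real.sqrt (1 + ε ^ 2 / (4 * σ ^ 4)) - ε / (2 * σ)

lemma sbStepSD_eq (ε σ : ℝ) (hσ : 0 < σ) :
    sbStepSD ε σ = Real.sqrt (σ ^ 2 + ε ^ 2 / (4 * σ ^ 2)) - ε / (2 * σ) := by
  unfold sbStepSD
  congr 1
  rw [show σ ^ 2 + ε ^ 2 / (4 * σ ^ 2) = σ ^ 2 * (1 + ε ^ 2 / (4 * σ ^ 4)) by
    field_simp]
  rw [Real.sqrt_mul (by positivity), Real.sqrt_sq hσ.le]

/-- The Schrödinger-bridge step for the time-reversed heat flow is Lipschitz on centered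
Gaussians with constant `1 + ε/(2σ₁σ₂)`, provided `0 < ε < 2σ₁σ₂`. -/
theorem sbStepSD_lipschitz (σ₁ σ₂ ε : ℝ) (hσ₁ : 0 < σ₁) (hσ₂ : 0 < σ₂)
    (hε0 : 0 < ε) (hε : ε < 2 * σ₁ * σ₂) :
    |sbStepSD ε σ₁ - sbStepSD ε σ₂| ≤ (1 + ε / (2 * σ₁ * σ₂)) * |σ₁ - σ₂| := by
  set B₁ : ℝ := σ₁ ^ 2 + ε ^ 2 / (4 * σ₁ ^ 2) with hB₁def
  set B₂ : ℝ := σ₂ ^ 2 + ε ^ 2 / (4 * σ₂ ^ 2) with hB₂def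
  have hB₁ : (0:ℝ) < B₁ := by positivity
  have hB₂ : (0:ℝ) < B₂ := by positivity
  have hs₁ : σ₁ ≤ Real.sqrt B₁ := by
    rw [← Real.sqrt_sq hσ₁.le]
    exact Real.sqrt_le_sqrt (by rw [hB₁def]; exact le_add_of_nonneg_right (by positivity))
  have hs₂ : σ₂ ≤ Real.sqrt B₂ := by
    rw [← Real.sqrt_sq hσ₂.le]
    exact Real.sqrt_le_sqrt (by rw [hB₂def]; exact le_add_of_nonneg_right (by positivity))
  have hsum : 0 < σ₁ + σ₂ := by linarith
  have hsumle : σ₁ + σ₂ ≤ Real.sqrt B₁ + Real.sqrt B₂ := by linarith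
  -- factor B₁ - B₂
  have hfac0 : (0:ℝ) ≤ 1 - ε ^ 2 / (4 * σ₁ ^ 2 * σ₂ ^ 2) := by
    have : ε ^ 2 < 4 * σ₁ ^ 2 * σ₂ ^ 2 := by nlinarith
    have h4 : (0:ℝ) < 4 * σ₁ ^ 2 * σ₂ ^ 2 := by positivity
    rw [sub_nonneg, div_le_one h4]; linarith
  have hfac1 : 1 - ε ^ 2 / (4 * σ₁ ^ 2 * σ₂ ^ 2) ≤ 1 := by
    have : (0:ℝ) ≤ ε ^ 2 / (4 * σ₁ ^ 2 * σ₂ ^ 2) := by positivity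
    linarith
  have hdiff : B₁ - B₂ = (σ₁ - σ₂) * (σ₁ + σ₂) * (1 - ε ^ 2 / (4 * σ₁ ^ 2 * σ₂ ^ 2)) := by
    rw [hB₁def, hB₂def]; field_simp; ring
  have hBabs : |B₁ - B₂| ≤ |σ₁ - σ₂| * (σ₁ + σ₂) := by
    rw [hdiff, abs_mul, abs_mul, abs_of_pos hsum, abs_of_nonneg hfac0]
    calc |σ₁ - σ₂| * (σ₁ + σ₂) * (1 - ε ^ 2 / (4 * σ₁ ^ 2 * σ₂ ^ 2))
        ≤ |σ₁ - σ₂| * (σ₁ + σ₂) * 1 := by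
          apply mul_le_mul_of_nonneg_left hfac1 (by positivity)
      _ = |σ₁ - σ₂| * (σ₁ + σ₂) := by ring
  have hmul : (Real.sqrt B₁ - Real.sqrt B₂) * (Real.sqrt B₁ + Real.sqrt B₂) = B₁ - B₂ := by
    have e1 : Real.sqrt B₁ ^ 2 = B₁ := Real.sq_sqrt hB₁.le
    have e2 : Real.sqrt B₂ ^ 2 = B₂ := Real.sq_sqrt hB₂.le
    nlinarith [e1, e2]
  have h1 : |Real.sqrt B₁ - Real.sqrt B₂| ≤ |σ₁ - σ₂| := by
    have key : |Real.sqrt B₁ - Real.sqrt B₂| * (σ₁ + σ₂) ≤ |σ₁ - σ₂| * (σ₁ + σ₂) := by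
      calc |Real.sqrt B₁ - Real.sqrt B₂| * (σ₁ + σ₂)
          ≤ |Real.sqrt B₁ - Real.sqrt B₂| * (Real.sqrt B₁ + Real.sqrt B₂) :=
            mul_le_mul_of_nonneg_left hsumle (abs_nonneg _)
        _ = |(Real.sqrt B₁ - Real.sqrt B₂) * (Real.sqrt B₁ + Real.sqrt B₂)| := by
            rw [abs_mul, abs_of_nonneg (by positivity : (0:ℝ) ≤ Real.sqrt B₁ + Real.sqrt B₂)]
        _ = |B₁ - B₂| := by rw [hmul]
        _ ≤ |σ₁ - σ₂| * (σ₁ + σ₂) := hBabs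
    exact le_of_mul_le_mul_right key hsum
  have h2eq : ε / (2 * σ₂) - ε / (2 * σ₁) = ε / (2 * σ₁ * σ₂) * (σ₁ - σ₂) := by
    field_simp
  have h2 : |ε / (2 * σ₂) - ε / (2 * σ₁)| = ε / (2 * σ₁ * σ₂) * |σ₁ - σ₂| := by
    rw [h2eq, abs_mul, abs_of_nonneg (by positivity : (0:ℝ) ≤ ε / (2 * σ₁ * σ₂))]
  have hT : sbStepSD ε σ₁ - sbStepSD ε σ₂ =
      (Real.sqrt B₁ - Real.sqrt B₂) + (ε / (2 * σ₂) - ε / (2 * σ₁)) := by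
    rw [sbStepSD_eq ε σ₁ hσ₁, sbStepSD_eq ε σ₂ hσ₂]; ring
  calc |sbStepSD ε σ₁ - sbStepSD ε σ₂|
      ≤ |Real.sqrt B₁ - Real.sqrt B₂| + |ε / (2 * σ₂) - ε / (2 * σ₁)| := by
        rw [hT]; exact abs_add_le _ _
    _ ≤ |σ₁ - σ₂| + ε / (2 * σ₁ * σ₂) * |σ₁ - σ₂| := by rw [h2]; linarith
    _ = (1 + ε / (2 * σ₁ * σ₂)) * |σ₁ - σ₂| := by ring
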